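/- Let X be a finite set, h a permutation of X, M_h = {x ∈ X : h(x) ≠ x} its support, and K ≥ 2 an integer. Then there exist an integer t with t·K ≤ |M_h|, permutations G₁,…,G_t of X, each of which is a product of K pairwise disjoint transpositions, and a permutation h′ of X with |M_{h′}| ≤ 4(K−1), such that h = G₁∘G₂∘⋯∘G_t∘h′. -/
import Mathlib


namespace RevCirc

/-- A reversible gate on `n` wires: a target coordinate together with a set of
at most two control coordinates not containing the target.  With no controls it
is a NOT gate, with one control a CNOT gate and with two controls a 2-CNOT
(Toffoli) gate. -/
abbrev Gate (n : ℕ) : Type :=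
  {p : Fin n × Finset (Fin n) // p.2.card ≤ 2 ∧ p.1 ∉ p.2}

def Gate.target {n : ℕ} (g : Gate n) : Fin n := g.1.1

def Gate.controls {n : ℕ} (g : Gate n) : Finset (Fin n) := g.1.2

/-- The transformation of `ℤ₂ⁿ` defined by a gate: the target coordinate is
XOR-ed with the conjunction of the control coordinates. -/
def Gate.apply {n : ℕ} (g : Gate n) (x : Fin n → Bool) : Fin n → Bool :=
  fun i => if i = g.target then xor (x i) (decide (∀ j ∈ g.controls, x j = true)) else x i

/-- The transformation defined by a circuit (a list of gates, applied left to right). -/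
def evalCircuit {n : ℕ} (c : List (Gate n)) (x : Fin n → Bool) : Fin n → Bool :=
  c.foldl (fun y g => g.apply y) x

/-- A circuit realizes a permutation `h` of `ℤ₂ⁿ` (without additional inputs) if the
composition of its gates equals `h`. -/
def realizes {n : ℕ} (c : List (Gate n)) (h : Equiv.Perm (Fin n → Bool)) : Prop :=
  ∀ x, evalCircuit c x = h x

/-- The expanding function `ℤ₂ⁿ → ℤ₂^{n+q}` padding with zeros. -/
def expand (n q : ℕ) (x : Fin n → Bool) : Fin (n + q) → Bool :=
  fun i => if h : (i : ℕ) < n then x ⟨i, h⟩ else false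

/-- A circuit with `n+q` inputs implements `f : ℤ₂ⁿ → ℤ₂ⁿ` using `q` additional
inputs if for some permutation `π` of the wires, the coordinates `π(1),…,π(n)` of the
output on the zero-padded input give `f`. -/
def implements (n q : ℕ) (c : List (Gate (n + q)))
    (f : (Fin n → Bool) → (Fin n → Bool)) : Prop :=
  ∃ π : Equiv.Perm (Fin (n + q)), ∀ x : Fin n → Bool, ∀ i : Fin n,
    evalCircuit c (expand n q x) (π (Fin.castLE (Nat.le_add_right n q) i)) = f x i

/-- `F(n,q)`: the set of transformations `ℤ₂ⁿ → ℤ₂ⁿ` implementable by reversible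
circuits with `n+q` inputs. -/
def FSet (n q : ℕ) : Set ((Fin n → Bool) → (Fin n → Bool)) :=
  {f | ∃ c : List (Gate (n + q)), implements n q c f}

/-- The set of wires touched by a gate: its target together with its controls. -/
def Gate.support {n : ℕ} (g : Gate n) : Finset (Fin n) := insert g.target g.controls

/-- A circuit has depth 1 if the supports of its gates are pairwise disjoint. -/
def DepthOne {n : ℕ} (c : List (Gate n)) : Prop :=
  c.Pairwise fun g₁ g₂ => Disjoint g₁.support g₂.support

/-- The depth of a circuit: the minimal number of consecutive depth-1 sub-circuits
into which it can be divided. -/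
noncomputable def depth {n : ℕ} (c : List (Gate n)) : ℕ :=
  sInf {d | ∃ parts : List (List (Gate n)),
    parts.flatten = c ∧ (∀ p ∈ parts, DepthOne p) ∧ parts.length = d}

/-- The quantum weight of a circuit: each NOT and CNOT gate weighs `WC`, each
2-CNOT gate weighs `WT`. -/
def weight {n : ℕ} (WC WT : ℝ) (c : List (Gate n)) : ℝ :=
  (c.map fun g => if g.controls.card = 2 then WT else WC).sum

/-- `L(f,q)`: minimal gate complexity of a circuit implementing `f` with `q`
additional inputs. -/
noncomputable def Lmin (n q : ℕ) (f : (Fin n → Bool) → (Fin n → Bool)) : ℕ :=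
  sInf {l | ∃ c : List (Gate (n + q)), implements n q c f ∧ c.length = l}

/-- The Shannon gate complexity function `L(n,q)`. -/
noncomputable def ShannonL (n q : ℕ) : ℕ := sSup (Lmin n q '' FSet n q)

/-- `D(f,q)`: minimal depth of a circuit implementing `f` with `q` additional inputs. -/
noncomputable def Dmin (n q : ℕ) (f : (Fin n → Bool) → (Fin n → Bool)) : ℕ :=
  sInf {d | ∃ c : List (Gate (n + q)), implements n q c f ∧ depth c = d}

/-- The Shannon depth function `D(n,q)`. -/
noncomputable def ShannonD (n q : ℕ) : ℕ := sSup (Dmin n q '' FSet n q)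

/-- `W(f,q)`: minimal quantum weight of a circuit implementing `f` with `q`
additional inputs. -/
noncomputable def Wmin (WC WT : ℝ) (n q : ℕ) (f : (Fin n → Bool) → (Fin n → Bool)) : ℝ :=
  sInf {w | ∃ c : List (Gate (n + q)), implements n q c f ∧ weight WC WT c = w}

/-- The Shannon quantum weight function `W(n,q)`. -/
noncomputable def ShannonW (WC WT : ℝ) (n q : ℕ) : ℝ := sSup (Wmin WC WT n q '' FSet n q)

/-- A permutation is a product of `K` pairwise disjoint (independent) transpositions:
there are `2K` pairwise distinct points `x i, y i` with `g = (x 1, y 1)∘⋯∘(x K, y K)`. -/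
def IsProdOfDisjointTranspositions {X : Type*} [DecidableEq X] (K : ℕ)
    (g : Equiv.Perm X) : Prop :=
  ∃ x y : Fin K → X,
    Function.Injective (Sum.elim x y) ∧
    g = ((List.finRange K).map fun i => Equiv.swap (x i) (y i)).prod

end RevCirc

section AuxDecomp

open Finset

private 
lemma extract_aux {X : Type*} [Fintype X] [DecidableEq X] :
    ∀ (k j : ℕ) (h : Equiv.Perm X) (U : Finset X),
      (U ∩ h.support).card ≤ j →
      2 * j + 4 * k ≤ h.support.card + 3 →
      ∃ (ps : List (X × X)) (h' : Equiv.Perm X),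
        ps.length = k ∧
        ps.Pairwise (fun p q => p.1 ≠ q.1 ∧ p.1 ≠ q.2 ∧ p.2 ≠ q.1 ∧ p.2 ≠ q.2) ∧
        (∀ p ∈ ps, p.1 ≠ p.2 ∧ p.1 ∈ h.support ∧ p.2 ∈ h.support ∧ p.1 ∉ U ∧ p.2 ∉ U) ∧
        h'.support ⊆ h.support ∧
        (∀ p ∈ ps, p.2 ∉ h'.support) ∧
        h = h' * (ps.map fun p => Equiv.swap p.1 p.2).prod := by
  intro k
  induction k with
  | zero =>
    intro j h U _ _
    exact ⟨[], h, by simp⟩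
  | succ k ih =>
    intro j h U hU hcard
    set S := h.support with hS
    set img := (U ∩ S).image h.symm with himg
    set C := (S \ U) \ img with hC
    have hSU : (S \ U).card + (U ∩ S).card = S.card := by
      have h1 : S \ U = S \ (U ∩ S) := by
        ext a; simp only [mem_sdiff, mem_inter]; tauto
      have h2 : U ∩ S ⊆ S := inter_subset_right
      rw [h1, card_sdiff_of_subset h2, Nat.sub_add_cancel (card_le_card h2)]
    have himgcard : img.card ≤ j := le_trans (card_image_le) hU
    have hCcard : 1 ≤ C.card := by
      have h3 : (S \ U).card ≤ C.card + img.card := card_le_card_sdiff_add_card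
      omega
    obtain ⟨x, hx⟩ := card_pos.mp (by omega : 0 < C.card)
    have hxS : x ∈ S := (mem_sdiff.mp (mem_sdiff.mp hx).1).1
    have hxU : x ∉ U := (mem_sdiff.mp (mem_sdiff.mp hx).1).2
    have hximg : x ∉ img := (mem_sdiff.mp hx).2
    have hxhU : h x ∉ U := by
      intro hmem
      exact hximg (mem_image.mpr ⟨h x, mem_inter.mpr ⟨hmem, Equiv.Perm.apply_mem_support.mpr hxS⟩, h.symm_apply_apply x⟩)
    have hxne : x ≠ h x := fun e => (Equiv.Perm.mem_support.mp hxS) e.symm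
    have hhxS : h x ∈ S := Equiv.Perm.apply_mem_support.mpr hxS
    set s := Equiv.swap x (h x) with hs
    set h2 := h * s with hh2
    -- support facts
    have hfix : h2 (h x) = h x := by
      simp [hh2, hs, Equiv.swap_apply_right]
    have hhx_not : h x ∉ h2.support := by
      simp [Equiv.Perm.mem_support, hfix]
    have hsub : h2.support ⊆ S \ {h x} := by
      intro a ha
      rw [Equiv.Perm.mem_support] at ha
      rw [mem_sdiff, mem_singleton]
      constructor
      · by_contra haS
        have hax : a ≠ x := fun e => haS (e ▸ hxS)
        have hahx : a ≠ h x := fun e => haS (e ▸ hhxS)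
        have haA : h a = a := not_not.mp (fun hh => haS (Equiv.Perm.mem_support.mpr hh))
        exact ha (by simp [hh2, hs, Equiv.swap_apply_of_ne_of_ne hax hahx, haA])
      · intro e; subst e; exact ha hfix
    have hsup : S \ {x, h x} ⊆ h2.support := by
      intro a ha
      rw [mem_sdiff] at ha
      obtain ⟨haS, hanot⟩ := ha
      simp only [mem_insert, mem_singleton] at hanot
      push_neg at hanot
      rw [Equiv.Perm.mem_support]
      simp [hh2, hs, Equiv.swap_apply_of_ne_of_ne hanot.1 hanot.2]
      exact Equiv.Perm.mem_support.mp haS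
    have hcard2 : S.card ≤ h2.support.card + 2 := by
      have h1 := card_le_card hsup
      have h2' : (S \ {x, h x}).card + ({x, h x} : Finset X).card ≥ S.card :=
        card_le_card_sdiff_add_card
      have : ({x, h x} : Finset X).card ≤ 2 := card_insert_le _ _ |>.trans (by simp)
      omega
    -- recursive call
    set U' := insert x (insert (h x) U) with hU'
    have hU'card : (U' ∩ h2.support).card ≤ j + 1 := by
      have hsub2 : U' ∩ h2.support ⊆ insert x (U ∩ S) := by
        intro a ha
        rw [mem_inter] at ha
        obtain ⟨haU', haS2⟩ := ha
        rw [hU'] at haU'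
        simp only [mem_insert] at haU'
        rcases haU' with rfl | rfl | haU
        · exact mem_insert_self _ _
        · exact absurd haS2 hhx_not
        · exact mem_insert_of_mem (mem_inter.mpr ⟨haU, (mem_sdiff.mp (hsub haS2)).1⟩)
      calc (U' ∩ h2.support).card ≤ (insert x (U ∩ S)).card := card_le_card hsub2
        _ ≤ (U ∩ S).card + 1 := card_insert_le _ _
        _ ≤ j + 1 := by omega
    have hcard' : 2 * (j + 1) + 4 * k ≤ h2.support.card + 3 := by omega
    obtain ⟨ps', h', hlen, hpw, hmem, hsub', hsnd, hprod⟩ := ih (j + 1) h2 U' hU'card hcard'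
    have hsubS : h'.support ⊆ S := hsub'.trans (hsub.trans sdiff_subset)
    refine ⟨ps' ++ [(x, h x)], h', by simp [hlen], ?_, ?_, hsubS, ?_, ?_⟩
    · rw [List.pairwise_append]
      refine ⟨hpw, List.pairwise_singleton _ _, ?_⟩
      intro p hp q hq
      simp only [List.mem_singleton] at hq
      subst hq
      obtain ⟨-, -, -, h1U, h2U⟩ := hmem p hp
      have hx' : p.1 ≠ x ∧ p.1 ≠ h x := by
        constructor <;> (intro e; apply h1U; rw [hU', e]; simp)
      have hy' : p.2 ≠ x ∧ p.2 ≠ h x := by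
        constructor <;> (intro e; apply h2U; rw [hU', e]; simp)
      exact ⟨hx'.1, hx'.2, hy'.1, hy'.2⟩
    · intro p hp
      rw [List.mem_append, List.mem_singleton] at hp
      rcases hp with hp | rfl
      · obtain ⟨hne, h1S, h2S, h1U, h2U⟩ := hmem p hp
        have hsS := hsub.trans sdiff_subset
        refine ⟨hne, hsS h1S, hsS h2S, fun e => h1U (by rw [hU']; simp [e]), fun e => h2U (by rw [hU']; simp [e])⟩
      · exact ⟨hxne, hxS, hhxS, hxU, hxhU⟩
    · intro p hp
      rw [List.mem_append, List.mem_singleton] at hp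
      rcases hp with hp | rfl
      · exact hsnd p hp
      · exact fun hmem' => hhx_not (hsub' hmem')
    · rw [List.map_append, List.prod_append]
      simp only [List.map_cons, List.map_nil, List.prod_cons, List.prod_nil, mul_one]
      rw [← mul_assoc, ← hprod, hh2, mul_assoc, hs]
      rw [Equiv.swap_mul_self, mul_one]

private lemma extract_group_aux {X : Type*} [Fintype X] [DecidableEq X]
    (h : Equiv.Perm X) (K : ℕ) (hK : 1 ≤ K)
    (hbig : 4 * K ≤ h.support.card + 3) :
    ∃ (g h₂ : Equiv.Perm X), RevCirc.IsProdOfDisjointTranspositions K g ∧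
      h₂.support.card + K ≤ h.support.card ∧ h = h₂ * g := by
  obtain ⟨ps, h', hlen, hpw, hmem, hsub, hsnd, hprod⟩ :=
    extract_aux K 0 h ∅ (by simp) (by omega)
  have hpg := List.pairwise_iff_get.mp hpw
  have key : ∀ (i j : Fin ps.length), i ≠ j →
      (ps.get i).1 ≠ (ps.get j).1 ∧ (ps.get i).1 ≠ (ps.get j).2 ∧
      (ps.get i).2 ≠ (ps.get j).1 ∧ (ps.get i).2 ≠ (ps.get j).2 := by
    intro i j hij
    rcases lt_or_gt_of_ne hij with hlt | hgt
    · exact hpg i j hlt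
    · obtain ⟨a, b, c, d⟩ := hpg j i hgt
      exact ⟨a.symm, c.symm, b.symm, d.symm⟩
  have hself : ∀ i : Fin ps.length, (ps.get i).1 ≠ (ps.get i).2 :=
    fun i => (hmem _ (ps.get_mem ..)).1
  set e : Fin K → Fin ps.length := Fin.cast hlen.symm with he
  have heinj : ∀ i j : Fin K, e i = e j → i = j := by
    intro i j hij
    apply Fin.ext
    have := congrArg Fin.val hij
    simpa [he] using this
  refine ⟨(ps.map fun p => Equiv.swap p.1 p.2).prod, h', ?_, ?_, hprod⟩
  · refine ⟨fun i => (ps.get (e i)).1, fun i => (ps.get (e i)).2, ?_, ?_⟩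
    · intro a b hab
      match a, b with
      | Sum.inl i, Sum.inl j =>
        simp only [Sum.elim_inl] at hab
        by_contra hne
        have : i ≠ j := fun hh => hne (by rw [hh])
        exact (key (e i) (e j) (fun hh => this (heinj _ _ hh))).1 hab
      | Sum.inl i, Sum.inr j =>
        simp only [Sum.elim_inl, Sum.elim_inr] at hab
        exfalso
        by_cases hij : e i = e j
        · rw [hij] at hab; exact hself (e j) hab
        · exact (key (e i) (e j) hij).2.1 hab
      | Sum.inr i, Sum.inl j =>
        simp only [Sum.elim_inl, Sum.elim_inr] at hab
        exfalso
        by_cases hij : e i = e j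
        · rw [hij] at hab; exact hself (e j) hab.symm
        · exact (key (e i) (e j) hij).2.2.1 hab
      | Sum.inr i, Sum.inr j =>
        simp only [Sum.elim_inr] at hab
        by_contra hne
        have : i ≠ j := fun hh => hne (by rw [hh])
        exact (key (e i) (e j) (fun hh => this (heinj _ _ hh))).2.2.2 hab
    · have hlist : (List.finRange K).map (fun i => ps.get (e i)) = ps := by
        rw [he]
        subst hlen
        exact List.map_get_finRange ps
      calc (ps.map fun p => Equiv.swap p.1 p.2).prod
          = (((List.finRange K).map (fun i => ps.get (e i))).map
              fun p => Equiv.swap p.1 p.2).prod := by rw [hlist]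
        _ = ((List.finRange K).map fun i =>
              Equiv.swap (ps.get (e i)).1 (ps.get (e i)).2).prod := by
            rw [List.map_map]; rfl
  · set T := (ps.map Prod.snd).toFinset with hT
    have hnd : (ps.map Prod.snd).Nodup := by
      refine List.Pairwise.map _ ?_ hpw
      intro a b hab
      exact hab.2.2.2
    have hTcard : T.card = K := by
      rw [hT, List.toFinset_card_of_nodup hnd, List.length_map, hlen]
    have hTS : T ⊆ h.support := by
      intro a ha
      rw [hT, List.mem_toFinset, List.mem_map] at ha
      obtain ⟨p, hp, rfl⟩ := ha
      exact (hmem p hp).2.2.1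
    have hsubT : h'.support ⊆ h.support \ T := by
      intro a ha
      rw [mem_sdiff]
      refine ⟨hsub ha, ?_⟩
      rw [hT, List.mem_toFinset, List.mem_map]
      rintro ⟨p, hp, rfl⟩
      exact hsnd p hp ha
    have h1 := card_le_card hsubT
    have h2 := card_le_card hTS
    rw [card_sdiff_of_subset hTS] at h1
    omega

private lemma main_decomp_aux {X : Type*} [Fintype X] [DecidableEq X]
    (K : ℕ) (hK : 2 ≤ K) :
    ∀ (n : ℕ) (h : Equiv.Perm X), h.support.card ≤ n →
    ∃ (t : ℕ) (G : Fin t → Equiv.Perm X) (h' : Equiv.Perm X),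
      t * K ≤ h.support.card ∧
      (∀ i, RevCirc.IsProdOfDisjointTranspositions K (G i)) ∧
      h'.support.card ≤ 4 * (K - 1) ∧
      h = (List.ofFn G).foldr Equiv.trans h' := by
  intro n
  induction n with
  | zero =>
    intro h hn
    exact ⟨0, fun i => i.elim0, h, by simp, fun i => i.elim0, by omega, by simp⟩
  | succ m ih =>
    intro h hn
    by_cases hle : h.support.card ≤ 4 * (K - 1)
    · exact ⟨0, fun i => i.elim0, h, by simp, fun i => i.elim0, hle, by simp⟩
    · have hbig : 4 * K ≤ h.support.card + 3 := by omega
      obtain ⟨g, h₂, hg, hcard, heq⟩ := extract_group_aux h K (by omega) hbig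
      obtain ⟨t', G', h'', ht', hG', hres, hdec⟩ := ih h₂ (by omega)
      refine ⟨t' + 1, Fin.cons g G', h'', ?_, ?_, hres, ?_⟩
      · have : (t' + 1) * K = t' * K + K := by ring
        omega
      · intro i
        refine Fin.cases ?_ ?_ i
        · simpa using hg
        · intro j; simpa using hG' j
      · have hofn : List.ofFn (Fin.cons g G' : Fin (t' + 1) → Equiv.Perm X)
            = g :: List.ofFn G' := by
          rw [List.ofFn_succ]
          simp
        rw [hofn, List.foldr_cons, ← hdec, heq]
        rfl

end AuxDecomp



/-- Theorem: every permutation `h` of a finite set decomposes as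
`h = G₁∘⋯∘G_t∘h'` (left-to-right composition), where each `Gᵢ` is a product of `K`
pairwise disjoint transpositions, `t·K ≤ |M_h|`, and the residual permutation `h'`
has `|M_{h'}| ≤ 4(K−1)`. -/
theorem decomposition_into_groups_of_disjoint_transpositions
    {X : Type*} [Fintype X] [DecidableEq X] (h : Equiv.Perm X) (K : ℕ) (hK : 2 ≤ K) :
    ∃ (t : ℕ) (G : Fin t → Equiv.Perm X) (h' : Equiv.Perm X),
      t * K ≤ h.support.card ∧
      (∀ i, RevCirc.IsProdOfDisjointTranspositions K (G i)) ∧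
      h'.support.card ≤ 4 * (K - 1) ∧
      h = (List.ofFn G).foldr Equiv.trans h' := by
  exact main_decomp_aux K hK h.support.card h le_rfl
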